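/- arXiv:2405.14167 — 2 statements merged into one kernel-verified Lean document; each statement's English description precedes it below -/
import Mathlib

section
/- Let R be a ring with involution, I a two-sided ideal with R/I a finite principal ideal ring, and let t : A × B → R/I be a ℤ-bilinear pairing of R-modules that is R-linear in the first variable and conjugate R-linear in the second (t(αx, βy) = α·t(x,y)·β̄ appropriately interpreted), and non-degenerate (t(a,B) = 0 implies a = 0, and t(A,b) = 0 implies b = 0). If a ∈ A has annihilator exactly I, then the map b ↦ t(a,b) is surjective onto R/I. -/
/-- With `R` a ring with involution and `R/I` (modelled as a ring `S`
with surjective `f : R →+* S`, `I = ker f`) a finite principal ideal ring, let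
`t : A × B → S` be a nondegenerate pairing of `R`-modules, `R`-linear in the first
variable and conjugate-`R`-linear in the second.  If `a ∈ A` has annihilator exactly
`I`, then `b ↦ t a b` is surjective onto `S = R/I`. -/
theorem stmt_2 (R S : Type*) [Ring R] [Ring S] [Finite S]
    (conj : R → R) (hconj : ∀ x, conj (conj x) = x)
    (hc1 : conj 1 = 1) (hcadd : ∀ x y, conj (x + y) = conj x + conj y)
    (hcmul : ∀ x y, conj (x * y) = conj y * conj x)
    (f : R →+* S) (hf : Function.Surjective f)
    (hleft : ∀ J : Ideal S, J.IsPrincipal)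
    (hright : ∀ J : Ideal Sᵐᵒᵖ, J.IsPrincipal)
    (A B : Type*) [AddCommGroup A] [AddCommGroup B] [Module R A] [Module R B]
    (t : A → B → S)
    (haddl : ∀ x y z, t (x + y) z = t x z + t y z)
    (haddr : ∀ x y z, t x (y + z) = t x y + t x z)
    (hlin : ∀ (α : R) (x : A) (y : B), t (α • x) y = f α * t x y)
    (hconjlin : ∀ (β : R) (x : A) (y : B), t x (β • y) = t x y * f (conj β))
    (hndl : ∀ a : A, (∀ b : B, t a b = 0) → a = 0)
    (hndr : ∀ b : B, (∀ a : A, t a b = 0) → b = 0)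
    (a : A) (hann : ∀ r : R, r • a = 0 ↔ f r = 0) :
    Function.Surjective (fun b : B => t a b) := by
  classical
  have hzero : t a 0 = 0 := by
    have h := haddr a 0 0
    simpa using h
  -- the image of `b ↦ t a b` as a right ideal of `S`, i.e. an ideal of `Sᵐᵒᵖ`
  set T : Ideal Sᵐᵒᵖ :=
    { carrier := {x | ∃ b, t a b = x.unop}
      add_mem' := by
        rintro x y ⟨b1, hb1⟩ ⟨b2, hb2⟩
        exact ⟨b1 + b2, by simp [haddr, hb1, hb2]⟩
      zero_mem' := ⟨0, by simpa using hzero⟩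
      smul_mem' := by
        rintro c x ⟨b, hb⟩
        obtain ⟨r, hr⟩ := hf c.unop
        refine ⟨conj r • b, ?_⟩
        rw [hconjlin, hconj, hr, hb, smul_eq_mul, MulOpposite.unop_mul] } with hT
  obtain ⟨g, hg⟩ := (hright T).principal
  have hmem : ∀ b, ∃ c : Sᵐᵒᵖ, t a b = g.unop * c.unop := by
    intro b
    have hx : (MulOpposite.op (t a b)) ∈ T := ⟨b, rfl⟩
    rw [hg] at hx
    obtain ⟨c, hc⟩ := Submodule.mem_span_singleton.mp hx
    refine ⟨c, ?_⟩
    have := congrArg MulOpposite.unop hc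
    rw [smul_eq_mul, MulOpposite.unop_mul] at this
    simpa using this.symm
  have hg0 : ∃ b0, t a b0 = g.unop := by
    have : g ∈ T := hg ▸ Submodule.mem_span_singleton_self g
    exact this
  -- left annihilator of g is zero
  have hinj : ∀ x : S, x * g.unop = 0 → x = 0 := by
    intro x hx
    obtain ⟨r, hr⟩ := hf x
    have hra : r • a = 0 := by
      apply hndl
      intro b
      obtain ⟨c, hc⟩ := hmem b
      rw [hlin, hr, hc, ← mul_assoc, hx, zero_mul]
    have h0 := (hann r).mp hra
    rw [← hr]; exact h0
  have hs1 : Function.Surjective (fun s : S => s * g.unop) := by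
    apply Finite.surjective_of_injective
    intro x y h
    have : (x - y) * g.unop = 0 := by
      rw [sub_mul, sub_eq_zero]; exact h
    have := hinj _ this
    exact sub_eq_zero.mp this
  obtain ⟨u, hu⟩ := hs1 1
  have hu' : u * g.unop = 1 := hu
  have hs2 : Function.Surjective (fun s : S => g.unop * s) := by
    apply Finite.surjective_of_injective
    intro x y h
    have h' : g.unop * x = g.unop * y := h
    calc x = u * g.unop * x := by rw [hu', one_mul]
    _ = u * (g.unop * y) := by rw [mul_assoc, h']
    _ = u * g.unop * y := by rw [mul_assoc]
    _ = y := by rw [hu', one_mul]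
  intro s
  obtain ⟨v, hv⟩ := hs2 s
  obtain ⟨r', hr'⟩ := hf v
  obtain ⟨b0, hb0⟩ := hg0
  refine ⟨conj r' • b0, ?_⟩
  show t a (conj r' • b0) = s
  rw [hconjlin, hconj, hr', hb0]
  exact hv
end

section
/- Let R = ℤ[τ] be an imaginary quadratic order acting by complex multiplication on an abelian group E (i.e., a ring homomorphism R → End(E)). Define ε : R ⊗_ℤ E → E by ε(α ⊗ P) = [α]P and η : E → R ⊗_ℤ E by η(P) = 1 ⊗ [−τ]P + τ ⊗ P. Then the sequence 0 → E → R ⊗_ℤ E → E → 0 with maps η and ε is exact: η is injective, ε is surjective, and ker ε = im η. -/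
open TensorProduct

/-- Let `R = ℤ + τℤ` be an imaginary quadratic order (with ℤ-basis
`1, τ`) acting by complex multiplication on an abelian group `E` (i.e. `E` is an
`R`-module).  With `ε : R ⊗_ℤ E → E` the map `α ⊗ P ↦ [α]P` and
`η : E → R ⊗_ℤ E`, `η(P) = 1 ⊗ [−τ]P + τ ⊗ P`, the sequence
`0 → E → R ⊗_ℤ E → E → 0` is exact: `η` is injective, `ε` is surjective, and
`ker ε = im η`. -/
theorem stmt_9 (R : Type*) [CommRing R] (τ : R) (conj : R →+* R)
    (hinv : ∀ x, conj (conj x) = x)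
    (T N : ℤ) (htr : τ + conj τ = (T : R)) (hnm : τ * conj τ = (N : R))
    (b : Module.Basis (Fin 2) ℤ R) (hb0 : b 0 = 1) (hb1 : b 1 = τ)
    (E : Type*) [AddCommGroup E] [Module R E]
    (ε : R ⊗[ℤ] E →ₗ[ℤ] E) (hε : ∀ (α : R) (P : E), ε (α ⊗ₜ[ℤ] P) = α • P) :
    let η : E → R ⊗[ℤ] E := fun P => (1 : R) ⊗ₜ[ℤ] ((-τ) • P) + τ ⊗ₜ[ℤ] P
    Function.Injective η ∧ Function.Surjective ε ∧
      (∀ x : R ⊗[ℤ] E, ε x = 0 ↔ ∃ P : E, η P = x) := by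
  intro η
  -- coordinate maps
  set ψ0 : R ⊗[ℤ] E →ₗ[ℤ] E :=
    TensorProduct.lift ((b.coord 0).smulRight (LinearMap.id : E →ₗ[ℤ] E)) with hψ0
  set ψ1 : R ⊗[ℤ] E →ₗ[ℤ] E :=
    TensorProduct.lift ((b.coord 1).smulRight (LinearMap.id : E →ₗ[ℤ] E)) with hψ1
  have hψ0t : ∀ (α : R) (P : E), ψ0 (α ⊗ₜ[ℤ] P) = b.repr α 0 • P := by
    intro α P; rw [hψ0]; erw [TensorProduct.lift.tmul]; simp
  have hψ1t : ∀ (α : R) (P : E), ψ1 (α ⊗ₜ[ℤ] P) = b.repr α 1 • P := by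
    intro α P; rw [hψ1]; erw [TensorProduct.lift.tmul]; simp
  have hrepr0 : b.repr 1 = Finsupp.single 0 1 := by rw [← hb0]; exact b.repr_self 0
  have hrepr1 : b.repr τ = Finsupp.single 1 1 := by rw [← hb1]; exact b.repr_self 1
  have key : ∀ x : R ⊗[ℤ] E, x = (1 : R) ⊗ₜ[ℤ] (ψ0 x) + τ ⊗ₜ[ℤ] (ψ1 x) := by
    intro x
    induction x using TensorProduct.induction_on with
    | zero => simp
    | tmul α P =>
        rw [hψ0t, hψ1t]
        conv_lhs => rw [← b.sum_repr α]
        rw [Fin.sum_univ_two, hb0, hb1, TensorProduct.add_tmul,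
          TensorProduct.smul_tmul, TensorProduct.smul_tmul]
    | add x y hx hy =>
        rw [map_add, map_add, TensorProduct.tmul_add, TensorProduct.tmul_add]
        conv_lhs => rw [hx, hy]
        abel
  have hψ1η : ∀ P : E, ψ1 (η P) = P := by
    intro P
    simp only [η, map_add, hψ1t, hrepr0, hrepr1]
    simp
  refine ⟨?_, ?_, ?_⟩
  · intro P Q h
    have := congrArg ψ1 h
    rwa [hψ1η, hψ1η] at this
  · intro Q
    exact ⟨(1 : R) ⊗ₜ[ℤ] Q, by rw [hε, one_smul]⟩
  · intro x
    constructor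
    · intro hx
      refine ⟨ψ1 x, ?_⟩
      have hx2 : ε x = ψ0 x + τ • ψ1 x := by
        conv_lhs => rw [key x]
        rw [map_add, hε, hε, one_smul]
      have hP : ψ0 x = (-τ) • ψ1 x := by
        rw [hx] at hx2
        rw [neg_smul]
        exact eq_neg_of_add_eq_zero_left hx2.symm
      show (1 : R) ⊗ₜ[ℤ] ((-τ) • ψ1 x) + τ ⊗ₜ[ℤ] (ψ1 x) = x
      rw [← hP, ← key x]
    · rintro ⟨P, rfl⟩
      show ε ((1 : R) ⊗ₜ[ℤ] ((-τ) • P) + τ ⊗ₜ[ℤ] P) = 0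
      rw [map_add, hε, hε, one_smul, neg_smul, neg_add_cancel]
end
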